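/- For all natural numbers r ≤ n and reals x, 0 < q < 1, the q-Bernstein polynomials satisfy the inversion formula ([x]_q)^r = Σ_{l=0}^{n} Σ_{m=0}^{n-l} S(n-l, m) · (C(n, l)/C(n, r)) · ([x]_{q^{-1}})_m · B_{r,l}(x, q), where ([x]_{q^{-1}})_m is the falling factorial and B_{r,l}(x,q) = 0 for l < r (this is the Y = 1 case of Theorem 2.3, where E[Y^{n-r}] = 1). -/

import Mathlib

/-!
Reading off coefficients of the derivative of `(eˣ - 1)^(m+1) / (m+1)!` shows that the
exponential generating function forces `S = Nat.stirlingSecond`. Since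
`X · (X)ₘ = (X)ₘ₊₁ + m (X)ₘ`, the usual recurrence then gives `∑ₘ S(k,m) (c)ₘ = c^k`, so with
`c = [x]_{q⁻¹}` the inner sum is `c^(n-l)`. The outer sum then becomes
`([x]_q)^r / C(n,r) · ∑ₗ C(n,l) C(l,r) b^(l-r) c^(n-l)` with `b = [1-x]_q`, which is
`([x]_q)^r (b + c)^(n-r)` by `C(n,l) C(l,r) = C(n,r) C(n-r,l-r)` and the binomial theorem;
finally `[1-x]_q + [x]_{q⁻¹} = 1`.
-/

/-- The `q`-analog `[t]_q = (q^t - 1)/(q - 1)`, where `q ^ t` is the real power. -/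
noncomputable def qnum (q t : ℝ) : ℝ := (q ^ t - 1) / (q - 1)

/-- The falling factorial `(c)_m = c(c-1)⋯(c-m+1)` of a real number. -/
noncomputable def fallFact (c : ℝ) (m : ℕ) : ℝ := ∏ i ∈ Finset.range m, (c - i)

/-- The `q`-Bernstein polynomial `B_{r,l}(x,q) = C(l,r) ([x]_q)^r ([1-x]_q)^{l-r}`;
it vanishes for `l < r` since then `C(l,r) = 0`. -/
noncomputable def qBernstein (r l : ℕ) (x q : ℝ) : ℝ :=
  (l.choose r : ℝ) * (qnum q x) ^ r * (qnum q (1 - x)) ^ (l - r)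

open Finset

namespace PowerSeries

section Derivative

variable {A : Type*} [CommRing A] [Algebra ℚ A]

theorem derivative_exp_sub_one_pow_succ (m : ℕ) :
    d⁄dX A ((exp A - 1) ^ (m + 1)) =
      (m + 1 : A) • ((exp A - 1) ^ (m + 1) + (exp A - 1) ^ m) := by
  rw [Derivation.leibniz_pow, map_sub, derivative_exp, Derivation.map_one_eq_zero, sub_zero,
    Nat.add_sub_cancel, smul_eq_mul, nsmul_eq_mul, smul_eq_C_mul]
  simp only [map_add, map_one, map_natCast, Nat.cast_succ]
  ring

theorem coeff_succ_exp_sub_one_pow_succ (k m : ℕ) :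
    coeff (k + 1) ((exp A - 1) ^ (m + 1)) * (k + 1 : A) =
      (m + 1 : A) * (coeff k ((exp A - 1) ^ (m + 1)) + coeff k ((exp A - 1) ^ m)) := by
  rw [← coeff_derivative, derivative_exp_sub_one_pow_succ, map_smul, map_add, smul_eq_mul]

end Derivative

variable {K : Type*} [Field K] [CharZero K]

theorem coeff_exp_sub_one_pow (k m : ℕ) :
    coeff k ((m.factorial : K)⁻¹ • (exp K - 1) ^ m) =
      (Nat.stirlingSecond k m : K) / k.factorial := by
  induction k generalizing m with
  | zero => cases m <;> simp
  | succ k ih =>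
    cases m with
    | zero => simp [coeff_one]
    | succ m =>
      have hk : (k + 1 : K) ≠ 0 := Nat.cast_add_one_ne_zero k
      have hm : (m + 1 : K) ≠ 0 := Nat.cast_add_one_ne_zero m
      have hkf : (k.factorial : K) ≠ 0 := Nat.cast_ne_zero.mpr k.factorial_ne_zero
      have hmf : (m.factorial : K) ≠ 0 := Nat.cast_ne_zero.mpr m.factorial_ne_zero
      have ih_succ := ih (m + 1)
      have ih_self := ih m
      simp only [map_smul, smul_eq_mul, Nat.factorial_succ, Nat.cast_mul, Nat.cast_succ]
        at ih_succ ih_self ⊢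
      rw [inv_mul_eq_iff_eq_mul₀ (mul_ne_zero hm hmf)] at ih_succ
      rw [inv_mul_eq_iff_eq_mul₀ hmf] at ih_self
      rw [← mul_div_cancel_right₀ (coeff (k + 1) _) hk, coeff_succ_exp_sub_one_pow_succ,
        ih_succ, ih_self, Nat.stirlingSecond_succ_succ]
      push_cast
      field_simp

end PowerSeries

namespace Polynomial

theorem sum_stirlingSecond_mul_descPochhammer (R : Type*) [CommRing R] (k : ℕ) :
    ∑ m ∈ range (k + 1), (k.stirlingSecond m : R[X]) * descPochhammer R m = X ^ k := by
  induction k with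
  | zero => simp
  | succ k ih =>
    have shift : ∑ m ∈ range (k + 1), ((m : R[X]) + 1) * k.stirlingSecond (m + 1) *
          descPochhammer R (m + 1) =
        ∑ m ∈ range (k + 1), (m : R[X]) * k.stirlingSecond m * descPochhammer R m := by
      have h := sum_range_succ' (fun m => (m : R[X]) * k.stirlingSecond m * descPochhammer R m)
        (k + 1)
      rw [sum_range_succ, Nat.stirlingSecond_eq_zero_of_lt (Nat.lt_succ_self k)] at h
      simpa using h.symm
    rw [sum_range_succ', Nat.stirlingSecond_succ_zero, Nat.cast_zero, zero_mul, add_zero,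
      pow_succ', ← ih, mul_sum]
    have recurrence (m : ℕ) : ((k + 1).stirlingSecond (m + 1) : R[X]) * descPochhammer R (m + 1) =
        ((m : R[X]) + 1) * k.stirlingSecond (m + 1) * descPochhammer R (m + 1) +
          k.stirlingSecond m * descPochhammer R (m + 1) := by
      push_cast [Nat.stirlingSecond_succ_succ]
      ring
    rw [sum_congr rfl fun m _ => recurrence m, sum_add_distrib, shift, ← sum_add_distrib]
    refine sum_congr rfl fun m _ => ?_
    rw [descPochhammer_succ_right]
    ring

end Polynomial

theorem sum_choose_mul_choose_mul_pow_mul_pow {R : Type*} [CommSemiring R] (b c : R) (r n : ℕ) :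
    ∑ l ∈ range (n + 1), (n.choose l : R) * l.choose r * b ^ (l - r) * c ^ (n - l) =
      n.choose r * (b + c) ^ (n - r) := by
  rcases lt_or_ge n r with hnr | hrn
  · rw [Nat.choose_eq_zero_of_lt hnr, Nat.cast_zero, zero_mul]
    refine sum_eq_zero fun l hl => ?_
    rw [Nat.choose_eq_zero_of_lt (by grind : l < r)]
    simp
  obtain ⟨d, rfl⟩ := Nat.exists_eq_add_of_le hrn
  have below_r : ∑ l ∈ range r, ((r + d).choose l : R) * l.choose r * b ^ (l - r) *
      c ^ (r + d - l) = 0 :=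
    sum_eq_zero fun l hl => by simp [Nat.choose_eq_zero_of_lt (mem_range.mp hl)]
  rw [add_assoc, sum_range_add, below_r, zero_add, Nat.add_sub_cancel_left, add_pow, mul_sum]
  refine sum_congr rfl fun j _ => ?_
  have hchoose := Nat.choose_mul (n := r + d) (Nat.le_add_right r j)
  rw [Nat.add_sub_cancel_left, Nat.add_sub_cancel_left] at hchoose
  rw [Nat.add_sub_cancel_left, Nat.add_sub_add_left, ← Nat.cast_mul, hchoose]
  push_cast
  ring

theorem qnum_one_sub_add_qnum_inv {q : ℝ} (hq0 : 0 < q) (hq1 : q ≠ 1) (x : ℝ) :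
    qnum q (1 - x) + qnum q⁻¹ x = 1 := by
  have hq : q - 1 ≠ 0 := sub_ne_zero.mpr hq1
  have hq' : 1 - q ≠ 0 := sub_ne_zero.mpr hq1.symm
  have hqx : q ^ x ≠ 0 := (Real.rpow_pos_of_pos hq0 x).ne'
  rw [qnum, qnum, Real.rpow_sub hq0, Real.rpow_one, Real.inv_rpow hq0.le]
  field_simp
  ring

theorem eq_stirlingSecond_of_exp_sub_one_pow {K : Type*} [Field K] [CharZero K]
    {S : ℕ → ℕ → K}
    (hS : ∀ m : ℕ, PowerSeries.mk (fun k => S k m / (k.factorial : K)) =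
      ((m.factorial : K)⁻¹) • (PowerSeries.exp K - 1) ^ m) (k m : ℕ) :
    S k m = k.stirlingSecond m := by
  have h := congrArg (PowerSeries.coeff k) (hS m)
  rwa [PowerSeries.coeff_mk, PowerSeries.coeff_exp_sub_one_pow,
    div_left_inj' (Nat.cast_ne_zero.mpr k.factorial_ne_zero)] at h

theorem sum_stirlingSecond_mul_fallFact (c : ℝ) (k : ℕ) :
    ∑ m ∈ range (k + 1), (k.stirlingSecond m : ℝ) * fallFact c m = c ^ k := by
  simpa [fallFact, Polynomial.eval_finsetSum, descPochhammer_eval_eq_prod_range] using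
    congrArg (Polynomial.eval c) (Polynomial.sum_stirlingSecond_mul_descPochhammer ℝ k)

/-- Theorem 2.3 (case `Y = 1`): inversion formula expressing `([x]_q)^r` through
`q`-Bernstein polynomials, Stirling numbers of the second kind `S`
(egf `(e^v-1)^m/m!`) and falling factorials of `[x]_{q⁻¹}`. -/
theorem stmt_18 (q x : ℝ) (hq0 : 0 < q) (hq1 : q < 1) (r n : ℕ) (hrn : r ≤ n)
    (S : ℕ → ℕ → ℝ)
    (hS : ∀ m : ℕ, PowerSeries.mk (fun k => S k m / (k.factorial : ℝ)) =
      ((m.factorial : ℝ)⁻¹) • (PowerSeries.exp ℝ - 1) ^ m) :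
    (qnum q x) ^ r =
      ∑ l ∈ Finset.range (n + 1), ∑ m ∈ Finset.range (n - l + 1),
        S (n - l) m * ((n.choose l : ℝ) / (n.choose r : ℝ)) *
          fallFact (qnum q⁻¹ x) m * qBernstein r l x q := by
  have hr : (n.choose r : ℝ) ≠ 0 := Nat.cast_ne_zero.mpr (Nat.choose_pos hrn).ne'
  have inner (l : ℕ) : ∑ m ∈ range (n - l + 1), S (n - l) m * ((n.choose l : ℝ) / n.choose r) *
        fallFact (qnum q⁻¹ x) m * qBernstein r l x q =
      qnum q⁻¹ x ^ (n - l) * ((n.choose l : ℝ) / n.choose r * qBernstein r l x q) := by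
    rw [← sum_stirlingSecond_mul_fallFact, sum_mul]
    refine sum_congr rfl fun m _ => ?_
    rw [eq_stirlingSecond_of_exp_sub_one_pow hS]
    ring
  calc qnum q x ^ r
      = qnum q x ^ r / n.choose r *
          (n.choose r * (qnum q (1 - x) + qnum q⁻¹ x) ^ (n - r)) := by
        rw [qnum_one_sub_add_qnum_inv hq0 hq1.ne, one_pow, mul_one, div_mul_cancel₀ _ hr]
    _ = _ := by
        rw [← sum_choose_mul_choose_mul_pow_mul_pow, mul_sum]
        refine sum_congr rfl fun l _ => ?_
        rw [inner, qBernstein]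
        ring
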